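/- arXiv:0710.4508 — 4 statements merged into one kernel-verified Lean document; each statement's English description precedes it below -/
import Mathlib

section
/- Let f = (f₁,…,f_n) be a system of homogeneous real polynomials in n+1 variables of degrees d₁,…,d_n, with ‖f‖ = max_i ‖f_i‖ where ‖·‖ is the Bombieri–Weyl norm, and let D = max_i d_i. Then for all x, y on the unit sphere S^n with angular distance d(x,y) ≤ √2, one has ‖f(x) − f(y)‖_∞ ≤ ‖f‖ · √D · d(x,y). -/
/-! The kernel `K_x = (xᵀX)^d` reproduces evaluation, `g(x) - g(y) = ⟨g, K_x - K_y⟩`, so by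
Cauchy–Schwarz `|g(x) - g(y)| ≤ ‖g‖ ‖K_x - K_y‖`. For unit vectors at angle `θ`,
`‖K_x - K_y‖² = 2(1 - cos^d θ) ≤ 2d(1 - cos θ) ≤ dθ²` by Bernoulli's inequality and
`1 - θ²/2 ≤ cos θ`. -/

open MvPolynomial Finset
open scoped RealInnerProductSpace

/-- The Bombieri–Weyl inner product on (homogeneous) polynomials. -/
noncomputable def bwInner {m : ℕ} (g h : MvPolynomial (Fin m) ℝ) : ℝ :=
  ∑ J ∈ g.support ∪ h.support,
    g.coeff J * h.coeff J / (Nat.multinomial Finset.univ J : ℝ)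

/-- The Bombieri–Weyl norm. -/
noncomputable def bwNorm {m : ℕ} (g : MvPolynomial (Fin m) ℝ) : ℝ :=
  Real.sqrt (bwInner g g)

section

variable {m : ℕ}

lemma bwInner_eq_sum_of_subset {g h : MvPolynomial (Fin m) ℝ} {S : Finset (Fin m →₀ ℕ)}
    (hg : g.support ⊆ S) (hh : h.support ⊆ S) :
    bwInner g h = ∑ J ∈ S, g.coeff J * h.coeff J / (Nat.multinomial univ J : ℝ) := by
  refine sum_subset (union_subset hg hh) fun J _ hJ => ?_
  rw [notMem_support_iff.mp (notMem_union.mp hJ).1, zero_mul, zero_div]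

lemma bwInner_sub_right (g h₁ h₂ : MvPolynomial (Fin m) ℝ) :
    bwInner g (h₁ - h₂) = bwInner g h₁ - bwInner g h₂ := by
  classical
  have h₁S : h₁.support ⊆ g.support ∪ (h₁.support ∪ h₂.support) :=
    subset_union_left.trans subset_union_right
  have h₂S : h₂.support ⊆ g.support ∪ (h₁.support ∪ h₂.support) :=
    subset_union_right.trans subset_union_right
  have hsubS : (h₁ - h₂).support ⊆ g.support ∪ (h₁.support ∪ h₂.support) :=
    (support_sub _ _ _).trans subset_union_right
  rw [bwInner_eq_sum_of_subset subset_union_left hsubS,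
    bwInner_eq_sum_of_subset subset_union_left h₁S, bwInner_eq_sum_of_subset subset_union_left h₂S,
    ← sum_sub_distrib]
  refine sum_congr rfl fun J _ => ?_
  rw [coeff_sub]
  ring

lemma bwInner_self_nonneg (g : MvPolynomial (Fin m) ℝ) : 0 ≤ bwInner g g :=
  sum_nonneg fun _ _ => div_nonneg (mul_self_nonneg _) (Nat.cast_nonneg _)

lemma bwNorm_nonneg (g : MvPolynomial (Fin m) ℝ) : 0 ≤ bwNorm g :=
  Real.sqrt_nonneg _

lemma bwNorm_sq (g : MvPolynomial (Fin m) ℝ) : bwNorm g ^ 2 = bwInner g g :=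
  Real.sq_sqrt (bwInner_self_nonneg g)

lemma sq_bwInner_le (g h : MvPolynomial (Fin m) ℝ) :
    bwInner g h ^ 2 ≤ bwInner g g * bwInner h h := by
  classical
  have hM : ∀ J : Fin m →₀ ℕ, (0 : ℝ) ≤ Nat.multinomial univ J := fun _ => Nat.cast_nonneg _
  rw [bwInner_eq_sum_of_subset subset_union_left subset_union_left (S := g.support ∪ h.support),
    bwInner_eq_sum_of_subset subset_union_right subset_union_right (S := g.support ∪ h.support)]
  refine sum_sq_le_sum_mul_sum_of_sq_le_mul _ (fun J _ => div_nonneg (mul_self_nonneg _) (hM J))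
    (fun J _ => div_nonneg (mul_self_nonneg _) (hM J)) fun _ _ => le_of_eq ?_
  rw [div_mul_div_comm, div_pow]
  ring

lemma abs_bwInner_le_bwNorm_mul_bwNorm (g h : MvPolynomial (Fin m) ℝ) :
    |bwInner g h| ≤ bwNorm g * bwNorm h := by
  rw [bwNorm, bwNorm, ← Real.sqrt_mul (bwInner_self_nonneg g)]
  exact Real.abs_le_sqrt (sq_bwInner_le g h)

noncomputable def bwKernel (x : Fin m → ℝ) (d : ℕ) : MvPolynomial (Fin m) ℝ :=
  (∑ j, x j • X j) ^ d

lemma bwKernel_isHomogeneous (x : Fin m → ℝ) (d : ℕ) : (bwKernel x d).IsHomogeneous d := by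
  have hlin : (∑ j, x j • X j : MvPolynomial (Fin m) ℝ).IsHomogeneous 1 :=
    IsHomogeneous.sum _ _ 1 fun j _ => by
      rw [smul_eq_C_mul]
      exact (isHomogeneous_X ℝ j).C_mul (x j)
  simpa [bwKernel] using hlin.pow d

lemma coeff_bwKernel_of_degree_eq (x : Fin m → ℝ) {d : ℕ} {J : Fin m →₀ ℕ}
    (hJ : J.degree = d) :
    (bwKernel x d).coeff J = Nat.multinomial univ J * ∏ j, x j ^ J j := by
  rw [bwKernel, coeff_linearCombination_X_pow_of_fintype,
    if_pos (show J.sum (fun _ k => k) = d from hJ),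
    Finsupp.multinomial_eq_of_support_subset (subset_univ _), Finsupp.prod_fintype _ _ (by simp)]

lemma bwInner_bwKernel {g : MvPolynomial (Fin m) ℝ} {d : ℕ} (hg : g.IsHomogeneous d)
    (x : Fin m → ℝ) : bwInner g (bwKernel x d) = eval x g := by
  rw [bwInner, eval_eq', ← sum_subset subset_union_left fun J _ hJ => by
    rw [notMem_support_iff.mp hJ, zero_mul, zero_div]]
  refine sum_congr rfl fun J hJ => ?_
  have hJd : J.degree = d := by
    rw [Finsupp.degree_eq_weight_one]
    exact hg (mem_support_iff.mp hJ)
  rw [coeff_bwKernel_of_degree_eq x hJd]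
  have hM : (Nat.multinomial univ J : ℝ) ≠ 0 := mod_cast (Nat.multinomial_pos _ _).ne'
  field_simp

lemma eval_bwKernel (x y : Fin m → ℝ) (d : ℕ) : eval y (bwKernel x d) = (y ⬝ᵥ x) ^ d := by
  simp [bwKernel, dotProduct, mul_comm]

lemma bwInner_bwKernel_sub {g : MvPolynomial (Fin m) ℝ} {d : ℕ} (hg : g.IsHomogeneous d)
    (x y : Fin m → ℝ) : bwInner g (bwKernel x d - bwKernel y d) = eval x g - eval y g := by
  rw [bwInner_sub_right, bwInner_bwKernel hg, bwInner_bwKernel hg]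

lemma bwNorm_bwKernel_sub_sq (x y : Fin m → ℝ) (d : ℕ) :
    bwNorm (bwKernel x d - bwKernel y d) ^ 2 =
      (x ⬝ᵥ x) ^ d + (y ⬝ᵥ y) ^ d - 2 * (x ⬝ᵥ y) ^ d := by
  rw [bwNorm_sq,
    bwInner_bwKernel_sub ((bwKernel_isHomogeneous x d).sub (bwKernel_isHomogeneous y d)),
    map_sub, map_sub, eval_bwKernel, eval_bwKernel, eval_bwKernel, eval_bwKernel,
    dotProduct_comm y x]
  ring

lemma dotProduct_ofLp_eq_inner (x y : EuclideanSpace ℝ (Fin m)) :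
    (fun j => x j) ⬝ᵥ (fun j => y j) = ⟪x, y⟫ := by
  rw [EuclideanSpace.inner_eq_star_dotProduct, star_trivial, dotProduct_comm]

lemma bwNorm_bwKernel_sub_le {x y : EuclideanSpace ℝ (Fin m)} (hx : ‖x‖ = 1) (hy : ‖y‖ = 1)
    (d : ℕ) :
    bwNorm (bwKernel (fun j => x j) d - bwKernel (fun j => y j) d) ≤
      √d * Real.arccos ⟪x, y⟫ := by
  set θ := Real.arccos ⟪x, y⟫
  have hcos : Real.cos θ = ⟪x, y⟫ := by
    have := abs_real_inner_le_norm x y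
    rw [hx, hy, one_mul] at this
    exact Real.cos_arccos (neg_le_of_abs_le this) (le_of_abs_le this)
  have hsq : bwNorm (bwKernel (fun j => x j) d - bwKernel (fun j => y j) d) ^ 2 =
      2 * (1 - Real.cos θ ^ d) := by
    rw [bwNorm_bwKernel_sub_sq, dotProduct_ofLp_eq_inner, dotProduct_ofLp_eq_inner,
      dotProduct_ofLp_eq_inner, real_inner_self_eq_norm_sq, real_inner_self_eq_norm_sq, hx, hy,
      hcos]
    ring
  have hbernoulli : 1 + d * (Real.cos θ - 1) ≤ Real.cos θ ^ d := by
    simpa using one_add_mul_le_pow (a := Real.cos θ - 1) (by linarith [Real.neg_one_le_cos θ]) d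
  have hquad : 1 - θ ^ 2 / 2 ≤ Real.cos θ := Real.one_sub_sq_div_two_le_cos
  refine le_of_sq_le_sq ?_ (mul_nonneg (Real.sqrt_nonneg _) (Real.arccos_nonneg _))
  rw [hsq, mul_pow, Real.sq_sqrt (Nat.cast_nonneg d)]
  nlinarith [(Nat.cast_nonneg d : (0 : ℝ) ≤ d)]

theorem abs_eval_sub_eval_le_bwNorm_mul_arccos {g : MvPolynomial (Fin m) ℝ} {d : ℕ}
    (hg : g.IsHomogeneous d) {x y : EuclideanSpace ℝ (Fin m)} (hx : ‖x‖ = 1) (hy : ‖y‖ = 1) :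
    |eval (fun j => x j) g - eval (fun j => y j) g| ≤ bwNorm g * √d * Real.arccos ⟪x, y⟫ := by
  rw [← bwInner_bwKernel_sub hg, mul_assoc]
  exact (abs_bwInner_le_bwNorm_mul_bwNorm _ _).trans
    (mul_le_mul_of_nonneg_left (bwNorm_bwKernel_sub_le hx hy d) (bwNorm_nonneg g))

end

theorem stmt_3_general (n : ℕ) (hn : 0 < n) (d : Fin n → ℕ)
    (f : Fin n → MvPolynomial (Fin (n + 1)) ℝ)
    (hf : ∀ i, (f i).IsHomogeneous (d i))
    (x y : EuclideanSpace ℝ (Fin (n + 1)))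
    (hx : ‖x‖ = 1) (hy : ‖y‖ = 1) :
    (Finset.univ.sup' ⟨⟨0, hn⟩, Finset.mem_univ _⟩
        fun i => |eval (fun j => x j) (f i) - eval (fun j => y j) (f i)|) ≤
      (Finset.univ.sup' ⟨⟨0, hn⟩, Finset.mem_univ _⟩ fun i => bwNorm (f i)) *
        Real.sqrt ((Finset.univ.sup d : ℕ) : ℝ) * Real.arccos ⟪x, y⟫ := by
  refine sup'_le _ _ fun i hi => (abs_eval_sub_eval_le_bwNorm_mul_arccos (hf i) hx hy).trans ?_
  have hnorm : bwNorm (f i) ≤ univ.sup' ⟨⟨0, hn⟩, mem_univ _⟩ fun i => bwNorm (f i) :=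
    le_sup' (fun i => bwNorm (f i)) hi
  have hdeg : d i ≤ univ.sup d := le_sup hi
  gcongr
  · exact Real.arccos_nonneg _
  · exact (bwNorm_nonneg _).trans hnorm

/-- The exclusion lemma (Lipschitz bound): for a system of homogeneous
polynomials `f`, points `x y` on the unit sphere at angular distance
`d(x,y) = arccos⟪x,y⟫ ≤ √2`, one has `‖f(x)−f(y)‖_∞ ≤ ‖f‖ √D d(x,y)`,
where `‖f‖ = max_i ‖f_i‖` (Bombieri–Weyl) and `D = max_i d_i`. -/
theorem stmt_3 (n : ℕ) (hn : 0 < n) (d : Fin n → ℕ)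
    (f : Fin n → MvPolynomial (Fin (n + 1)) ℝ)
    (hf : ∀ i, (f i).IsHomogeneous (d i))
    (x y : EuclideanSpace ℝ (Fin (n + 1)))
    (hx : ‖x‖ = 1) (hy : ‖y‖ = 1)
    (hxy : Real.arccos ⟪x, y⟫ ≤ Real.sqrt 2) :
    (Finset.univ.sup' ⟨⟨0, hn⟩, Finset.mem_univ _⟩
        fun i => |eval (fun j => x j) (f i) - eval (fun j => y j) (f i)|) ≤
      (Finset.univ.sup' ⟨⟨0, hn⟩, Finset.mem_univ _⟩ fun i => bwNorm (f i)) *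
        Real.sqrt ((Finset.univ.sup d : ℕ) : ℝ) * Real.arccos ⟪x, y⟫ :=
  stmt_3_general n hn d f hf x y hx hy
end

section
/- Let x₁,…,x_q be points contained in an open half-sphere of S^n ⊂ ℝ^{n+1}, and suppose the closed balls B̄(x_i, r_i) (for the angular distance) have a common point. Then the spherical convex hull SCH(x₁,…,x_q) is contained in ⋃_{i=1}^q B̄(x_i, r_i). -/
open scoped RealInnerProductSpace

/-! Put `w = ∑ λᵢ xᵢ` and `z = w / ‖w‖`. Since `z` maximises `⟪w, ·⟫` on the unit ball,
`∑ λᵢ ⟪xᵢ, y⟫ = ⟪w, y⟫ ≤ ⟪w, z⟫ = ∑ λᵢ ⟪xᵢ, z⟫` for the common point `y`, so some `xᵢ` with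
`λᵢ > 0` satisfies `⟪xᵢ, y⟫ ≤ ⟪xᵢ, z⟫`. As `arccos` is antitone, `d(xᵢ, z) ≤ d(xᵢ, y) ≤ rᵢ`. -/

theorem Finset.exists_le_of_weighted_sum_le {ι R : Type*} [Ring R] [LinearOrder R]
    [IsStrictOrderedRing R] {s : Finset ι} {w a b : ι → R} (hw : ∀ i ∈ s, 0 ≤ w i)
    (hne : ∃ i ∈ s, w i ≠ 0) (h : ∑ i ∈ s, w i * a i ≤ ∑ i ∈ s, w i * b i) :
    ∃ i ∈ s, a i ≤ b i := by
  contrapose! h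
  obtain ⟨i₀, hi₀, hw₀⟩ := hne
  exact Finset.sum_lt_sum (fun i hi ↦ mul_le_mul_of_nonneg_left (h i hi).le (hw i hi))
    ⟨i₀, hi₀, mul_lt_mul_of_pos_left (h i₀ hi₀) ((hw i₀ hi₀).lt_of_ne' hw₀)⟩

section InnerProductSpace

variable {E : Type*} [NormedAddCommGroup E] [InnerProductSpace ℝ E]

theorem real_inner_le_inner_inv_norm_smul_self (w : E) {y : E} (hy : ‖y‖ ≤ 1) :
    ⟪w, y⟫ ≤ ⟪w, ‖w‖⁻¹ • w⟫ := by
  rw [real_inner_smul_right, real_inner_self_eq_norm_sq]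
  calc ⟪w, y⟫ ≤ ‖w‖ * ‖y‖ := real_inner_le_norm w y
    _ ≤ ‖w‖ := mul_le_of_le_one_right (norm_nonneg w) hy
    _ = ‖w‖⁻¹ * ‖w‖ ^ 2 := by
      rcases eq_or_ne ‖w‖ 0 with h | h
      · simp [h]
      · field_simp

theorem exists_inner_le_inner_normalize_sum_smul {ι : Type*} [Fintype ι] (x : ι → E)
    {l : ι → ℝ} (hl : ∀ i, 0 ≤ l i) (hw : ∑ i, l i • x i ≠ 0) {y : E} (hy : ‖y‖ ≤ 1) :
    ∃ i, ⟪x i, y⟫ ≤ ⟪x i, ‖∑ j, l j • x j‖⁻¹ • ∑ j, l j • x j⟫ := by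
  set w := ∑ j, l j • x j
  have inner_w (v : E) : ⟪w, v⟫ = ∑ i, l i * ⟪x i, v⟫ := by
    simp only [w, sum_inner, real_inner_smul_left]
  have hne : ∃ i ∈ Finset.univ, l i ≠ 0 := by
    contrapose! hw
    simp [w, hw]
  have hle := real_inner_le_inner_inv_norm_smul_self w hy
  rw [inner_w, inner_w] at hle
  simpa using Finset.exists_le_of_weighted_sum_le (fun i _ ↦ hl i) hne hle

end InnerProductSpace

theorem stmt_6_general (n q : ℕ)
    (x : Fin q → EuclideanSpace ℝ (Fin (n + 1))) (r : Fin q → ℝ)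
    (hcommon : ∃ y : EuclideanSpace ℝ (Fin (n + 1)), ‖y‖ = 1 ∧
      ∀ i, Real.arccos ⟪x i, y⟫ ≤ r i)
    (l : Fin q → ℝ) (hl : ∀ i, 0 ≤ l i)
    (hw : (∑ i, l i • x i) ≠ 0) :
    ∃ i, Real.arccos ⟪x i, ‖∑ j, l j • x j‖⁻¹ • ∑ j, l j • x j⟫ ≤ r i := by
  obtain ⟨y, hy, hyr⟩ := hcommon
  obtain ⟨i, hi⟩ := exists_inner_le_inner_normalize_sum_smul x hl hw hy.le
  exact ⟨i, (Real.arccos_le_arccos hi).trans (hyr i)⟩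

/-- Spherical convex hull lemma: if points `x₁,…,x_q` lie in an open
half-sphere and the closed balls `B̄(xᵢ, rᵢ)` (angular distance
`arccos⟪·,·⟫`) have a common point, then every point of the spherical
convex hull `(Σλᵢxᵢ)/‖Σλᵢxᵢ‖` lies in some `B̄(xᵢ, rᵢ)`. -/
theorem stmt_6 (n q : ℕ) (hq : 0 < q)
    (x : Fin q → EuclideanSpace ℝ (Fin (n + 1))) (r : Fin q → ℝ)
    (hx : ∀ i, ‖x i‖ = 1)
    (hhalf : ∃ v : EuclideanSpace ℝ (Fin (n + 1)), ∀ i, 0 < ⟪v, x i⟫)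
    (hcommon : ∃ y : EuclideanSpace ℝ (Fin (n + 1)), ‖y‖ = 1 ∧
      ∀ i, Real.arccos ⟪x i, y⟫ ≤ r i)
    (l : Fin q → ℝ) (hl : ∀ i, 0 ≤ l i) (hsum : ∑ i, l i = 1)
    (hw : (∑ i, l i • x i) ≠ 0) :
    ∃ i, Real.arccos ⟪x i, ‖∑ j, l j • x j‖⁻¹ • ∑ j, l j • x j⟫ ≤ r i :=
  stmt_6_general n q x r hcommon l hl hw
end

section
/- Let N = n+1 ≥ 2 and 0 < η ≤ 1. For y₁ = (1,…,1,1) and y₂ = (1,…,1,1−η) in ℝ^N, the cosine of the angle between them satisfies cos²(d) = (N−η)²/(N(N−2η+η²)) ≤ 1 − η²(N−1)/N², and consequently the angle d ≥ η/(2√N). -/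
set_option maxHeartbeats 1000000 in
/-- For `N = n+1 ≥ 2`, `0 < η ≤ 1`, `y₁ = (1,…,1)` and `y₂ = (1,…,1,1−η)`
in `ℝ^N`, the cosine `c` of the angle between them satisfies
`c² = (N−η)²/(N(N−2η+η²)) ≤ 1 − η²(N−1)/N²`, hence the angle is at least
`η/(2√N)`. -/
theorem stmt_9 (n : ℕ) (hn : 1 ≤ n) (η : ℝ) (hη : 0 < η) (hη1 : η ≤ 1)
    (y₁ y₂ : Fin (n + 1) → ℝ)
    (hy₁ : ∀ i, y₁ i = 1)
    (hy₂ : ∀ i, y₂ i = if i = Fin.last n then 1 - η else 1)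
    (c : ℝ)
    (hc : c = (∑ i, y₁ i * y₂ i) /
      (Real.sqrt (∑ i, y₁ i ^ 2) * Real.sqrt (∑ i, y₂ i ^ 2))) :
    c ^ 2 = ((n + 1 : ℝ) - η) ^ 2 /
        ((n + 1 : ℝ) * ((n + 1 : ℝ) - 2 * η + η ^ 2)) ∧
      c ^ 2 ≤ 1 - η ^ 2 * ((n + 1 : ℝ) - 1) / (n + 1 : ℝ) ^ 2 ∧
      η / (2 * Real.sqrt (n + 1 : ℝ)) ≤ Real.arccos c := by
  set N : ℝ := (n + 1 : ℝ) with hN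
  have hn1 : (1 : ℝ) ≤ (n : ℝ) := by exact_mod_cast hn
  have hNpos : (0 : ℝ) < N := by positivity
  have hN2 : (2 : ℝ) ≤ N := by simp [hN]; linarith
  set D : ℝ := N - 2 * η + η ^ 2 with hD
  have hDpos : (0 : ℝ) < D := by nlinarith
  -- sums
  have hsum1 : (∑ i, y₁ i * y₂ i) = N - η := by
    rw [Fin.sum_univ_castSucc]
    have h1 : ∀ i : Fin n, y₁ i.castSucc * y₂ i.castSucc = 1 := by
      intro i
      rw [hy₁, hy₂, if_neg (Fin.castSucc_lt_last i).ne]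
      ring
    rw [Finset.sum_congr rfl (fun i _ => h1 i), hy₁, hy₂, if_pos rfl]
    simp [hN]; ring
  have hsum2 : (∑ i, y₁ i ^ 2) = N := by
    have h1 : ∀ i : Fin (n+1), y₁ i ^ 2 = 1 := fun i => by rw [hy₁]; ring
    rw [Finset.sum_congr rfl (fun i _ => h1 i)]
    simp [hN]
  have hsum3 : (∑ i, y₂ i ^ 2) = D := by
    rw [Fin.sum_univ_castSucc]
    have h1 : ∀ i : Fin n, y₂ i.castSucc ^ 2 = 1 := by
      intro i
      rw [hy₂, if_neg (Fin.castSucc_lt_last i).ne]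
      ring
    rw [Finset.sum_congr rfl (fun i _ => h1 i), hy₂, if_pos rfl]
    simp [hD, hN]; ring
  rw [hsum1, hsum2, hsum3] at hc
  have hsqN : Real.sqrt N ^ 2 = N := Real.sq_sqrt hNpos.le
  have hsqD : Real.sqrt D ^ 2 = D := Real.sq_sqrt hDpos.le
  have hNη : 0 < N - η := by linarith
  have hc0 : 0 ≤ c := by
    rw [hc]
    positivity
  have hc2 : c ^ 2 = (N - η) ^ 2 / (N * D) := by
    rw [hc, div_pow, mul_pow, hsqN, hsqD]
  refine ⟨hc2, ?_, ?_⟩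
  · have hrhs : 1 - η ^ 2 * (N - 1) / N ^ 2 = (N ^ 2 - η ^ 2 * (N - 1)) / N ^ 2 := by
      field_simp
    rw [hc2, hrhs, div_le_div_iff₀ (by positivity) (by positivity)]
    have key : (N ^ 2 - η ^ 2 * (N - 1)) * (N * D) - (N - η) ^ 2 * N ^ 2
        = N * (η ^ 3 * ((N - 1) * (2 - η))) := by rw [hD]; ring
    nlinarith [mul_nonneg hNpos.le (mul_nonneg (pow_nonneg hη.le 3)
      (mul_nonneg (by linarith : (0:ℝ) ≤ N - 1) (by linarith : (0:ℝ) ≤ 2 - η)))]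
  · have hc2le : c ^ 2 ≤ 1 - η ^ 2 / (4 * N) := by
      have hrhs : 1 - η ^ 2 / (4 * N) = (4 * N - η ^ 2) / (4 * N) := by
        field_simp
      rw [hc2, hrhs, div_le_div_iff₀ (by positivity) (by positivity)]
      have key : (4 * N - η ^ 2) * (N * D) - (N - η) ^ 2 * (4 * N)
          = N * (η ^ 2 * (3 * N - 4 + η * (2 - η))) := by rw [hD]; ring
      nlinarith [mul_nonneg hNpos.le (mul_nonneg (sq_nonneg η)
        (by nlinarith [mul_nonneg hη.le (by linarith : (0:ℝ) ≤ 2 - η)] : (0:ℝ) ≤ 3 * N - 4 + η * (2 - η)))]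
    have hq : (0:ℝ) ≤ η ^ 2 / (4 * N) := by positivity
    have hc1 : c ≤ 1 := by nlinarith
    rw [Real.arccos_eq_arcsin hc0]
    set s := Real.sqrt (1 - c ^ 2) with hs
    have hcsq : c ^ 2 ≤ 1 := by linarith
    have hs1 : s ≤ 1 := Real.sqrt_le_one.mpr (by nlinarith [sq_nonneg c])
    have hs0 : 0 ≤ s := Real.sqrt_nonneg _
    have hkey : η / (2 * Real.sqrt N) ≤ s := by
      rw [hs]
      rw [Real.le_sqrt (by positivity) (by linarith)]
      rw [div_pow, mul_pow, hsqN]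
      have : η ^ 2 / (2 ^ 2 * N) = η ^ 2 / (4 * N) := by norm_num
      rw [this]
      linarith
    have harcsin : s ≤ Real.arcsin s := by
      have h := Real.sin_le (Real.arcsin_nonneg.mpr hs0)
      rwa [Real.sin_arcsin (by linarith) hs1] at h
    linarith
end

section
/- Any two distinct points of the grid G_η (the radial projection to S^n of the uniform grid of mesh η on the cube C^n = {‖y‖_∞ = 1} in ℝ^{n+1}) are at angular distance at least η/(2√(n+1)). -/
/-!
Let `x, y` be distinct grid points with `‖x‖ ≤ ‖y‖` and put `t = ‖x‖ / ‖y‖ ≤ 1`, so that the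
chord between their projections is `‖x - t • y‖ / ‖x‖`, with `‖x‖ ≤ √(n+1)`. Some coordinate of
`x - t • y` is at least `η/2`: if `1 - t ≥ η/2`, take a coordinate where `|x i| = 1`; otherwise
`t • y` is within `η/2` of `y`, and `x`, `y` differ by at least `η` in some coordinate.
Finally, the chord `√(2 - 2 cos θ) = 2 sin (θ/2)` never exceeds the arc `θ`.
-/

open Real
open scoped RealInnerProductSpace

lemma sqrt_two_sub_two_mul_le_arccos {t : ℝ} (h₁ : -1 ≤ t) (h₂ : t ≤ 1) :
    √(2 - 2 * t) ≤ arccos t := by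
  set θ := arccos t
  have hθ₀ : 0 ≤ θ := arccos_nonneg t
  have hθπ : θ ≤ π := arccos_le_pi t
  have hsin : 0 ≤ sin (θ / 2) := sin_nonneg_of_nonneg_of_le_pi (by linarith) (by linarith)
  have hchord : √(2 - 2 * t) = 2 * sin (θ / 2) := by
    have : 2 - 2 * t = (2 * sin (θ / 2)) ^ 2 := by
      rw [mul_pow, sin_sq_eq_half_sub, show 2 * (θ / 2) = θ by ring, cos_arccos h₁ h₂]
      ring
    rw [this, sqrt_sq (by positivity)]
  rw [hchord]
  linarith [sin_le (x := θ / 2) (by linarith)]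

lemma norm_sub_le_arccos_inner {V : Type*} [NormedAddCommGroup V] [InnerProductSpace ℝ V]
    {a b : V} (ha : ‖a‖ = 1) (hb : ‖b‖ = 1) : ‖a - b‖ ≤ arccos ⟪a, b⟫ := by
  have hinner : |⟪a, b⟫| ≤ 1 := by simpa [ha, hb] using abs_real_inner_le_norm a b
  have hnorm : ‖a - b‖ = √(2 - 2 * ⟪a, b⟫) := by
    rw [← sqrt_sq (norm_nonneg _), norm_sub_sq_real, ha, hb]
    ring_nf
  rw [hnorm]
  exact sqrt_two_sub_two_mul_le_arccos (abs_le.1 hinner).1 (abs_le.1 hinner).2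

lemma EuclideanSpace.norm_le_sqrt_card {ι : Type*} [Fintype ι] (x : EuclideanSpace ℝ ι)
    (hx : ∀ i, |x i| ≤ 1) : ‖x‖ ≤ √(Fintype.card ι) := by
  rw [← sqrt_sq (norm_nonneg x), EuclideanSpace.real_norm_sq_eq]
  gcongr
  calc ∑ i, x i ^ 2 ≤ ∑ _i : ι, (1 : ℝ) :=
        Finset.sum_le_sum fun i _ => (sq_le_one_iff_abs_le_one _).2 (hx i)
    _ = Fintype.card ι := by simp

lemma norm_inv_smul_sub_inv_smul {V : Type*} [NormedAddCommGroup V] [NormedSpace ℝ V]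
    {x : V} (hx : x ≠ 0) (y : V) :
    ‖‖x‖⁻¹ • x - ‖y‖⁻¹ • y‖ = ‖x‖⁻¹ * ‖x - (‖x‖ / ‖y‖) • y‖ := by
  have hx' : ‖x‖ ≠ 0 := norm_ne_zero_iff.2 hx
  have hscale : ‖x‖⁻¹ • (x - (‖x‖ / ‖y‖) • y) = ‖x‖⁻¹ • x - ‖y‖⁻¹ • y := by
    rw [smul_sub, smul_smul]
    congr 2
    field_simp
  rw [← hscale, norm_smul, norm_inv, norm_norm]

lemma exists_half_le_abs_sub_mul {ι : Type*} {x y : ι → ℝ} {η t : ℝ} (hy : ∀ i, |y i| ≤ 1)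
    {i₀ : ι} (hx : |x i₀| = 1) {j : ι} (hj : η ≤ |x j - y j|) (ht₀ : 0 ≤ t) (ht₁ : t ≤ 1) :
    ∃ i, η / 2 ≤ |x i - t * y i| := by
  by_cases hgap : η / 2 ≤ 1 - t
  · refine ⟨i₀, ?_⟩
    have hty : |t * y i₀| ≤ t := by
      rw [abs_mul, abs_of_nonneg ht₀]
      exact mul_le_of_le_one_right ht₀ (hy i₀)
    linarith [abs_sub_abs_le_abs_sub (x i₀) (t * y i₀)]
  · refine ⟨j, ?_⟩
    have hty : |y j - t * y j| ≤ 1 - t := by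
      rw [← one_sub_mul, abs_mul, abs_of_nonneg (sub_nonneg.2 ht₁)]
      exact mul_le_of_le_one_right (sub_nonneg.2 ht₁) (hy j)
    linarith [abs_sub_le (x j) (t * y j) (y j), abs_sub_comm (t * y j) (y j)]

section Grid

variable {ι : Type*} [Fintype ι] {η : ℝ} {x y : EuclideanSpace ℝ ι}

lemma div_two_sqrt_card_le_norm_sub_of_norm_le (hx : ∀ i, |x i| ≤ 1) (hy : ∀ i, |y i| ≤ 1)
    (hx₁ : ∃ i, |x i| = 1) (hsep : ∃ j, η ≤ |x j - y j|) (hle : ‖x‖ ≤ ‖y‖) :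
    η / (2 * √(Fintype.card ι)) ≤ ‖‖x‖⁻¹ • x - ‖y‖⁻¹ • y‖ := by
  obtain ⟨i₀, hi₀⟩ := hx₁
  obtain ⟨j, hj⟩ := hsep
  have hx_one : 1 ≤ ‖x‖ := hi₀ ▸ PiLp.norm_apply_le x i₀
  have hx_pos : 0 < ‖x‖ := by linarith
  have ht₁ : ‖x‖ / ‖y‖ ≤ 1 := div_le_one_of_le₀ hle (norm_nonneg y)
  obtain ⟨i, hi⟩ := exists_half_le_abs_sub_mul hy hi₀ hj (by positivity) ht₁
  have hcoord : η / 2 ≤ ‖x - (‖x‖ / ‖y‖) • y‖ :=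
    hi.trans (PiLp.norm_apply_le (x - (‖x‖ / ‖y‖) • y) i)
  have hcard : 0 < √(Fintype.card ι) := hx_pos.trans_le (EuclideanSpace.norm_le_sqrt_card x hx)
  rw [norm_inv_smul_sub_inv_smul (norm_pos_iff.1 hx_pos), inv_mul_eq_div]
  calc η / (2 * √(Fintype.card ι)) = η / 2 / √(Fintype.card ι) := (div_div _ _ _).symm
    _ ≤ ‖x - (‖x‖ / ‖y‖) • y‖ / √(Fintype.card ι) := by gcongr
    _ ≤ ‖x - (‖x‖ / ‖y‖) • y‖ / ‖x‖ := by
      gcongr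
      exact EuclideanSpace.norm_le_sqrt_card x hx

lemma div_two_sqrt_card_le_norm_sub (hx : ∀ i, |x i| ≤ 1) (hy : ∀ i, |y i| ≤ 1)
    (hx₁ : ∃ i, |x i| = 1) (hy₁ : ∃ i, |y i| = 1) (hsep : ∃ j, η ≤ |x j - y j|) :
    η / (2 * √(Fintype.card ι)) ≤ ‖‖x‖⁻¹ • x - ‖y‖⁻¹ • y‖ := by
  rcases le_total ‖x‖ ‖y‖ with hle | hle
  · exact div_two_sqrt_card_le_norm_sub_of_norm_le hx hy hx₁ hsep hle
  · rw [norm_sub_rev]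
    simp only [abs_sub_comm (x _)] at hsep
    exact div_two_sqrt_card_le_norm_sub_of_norm_le hy hx hy₁ hsep hle

end Grid

lemma abs_intCast_mul_zpow_neg_le_one {k : ℕ} {m : ℤ} (hm : |m| ≤ 2 ^ k) :
    |m * (2 : ℝ) ^ (-(k : ℤ))| ≤ 1 := by
  rw [abs_mul, zpow_neg, zpow_natCast, abs_inv, abs_pow, abs_two, ← div_eq_mul_inv,
    div_le_one (by positivity), ← Int.cast_abs]
  exact_mod_cast hm

lemma le_abs_intCast_mul_sub {η : ℝ} (hη : 0 ≤ η) {m₁ m₂ : ℤ} (h : m₁ * η ≠ m₂ * η) :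
    η ≤ |m₁ * η - m₂ * η| := by
  have hm : m₁ ≠ m₂ := by rintro rfl; exact h rfl
  rw [← sub_mul, abs_mul, abs_of_nonneg hη, ← Int.cast_sub, ← Int.cast_abs]
  exact le_mul_of_one_le_left hη (by exact_mod_cast Int.one_le_abs (sub_ne_zero.2 hm))

theorem stmt_10_general (n k : ℕ) (η : ℝ) (hη : η = (2 : ℝ) ^ (-(k : ℤ)))
    (y₁ y₂ : EuclideanSpace ℝ (Fin (n + 1)))
    (hy₁ : (∀ i, ∃ m : ℤ, |m| ≤ 2 ^ k ∧ y₁ i = m * η) ∧ ∃ i, |y₁ i| = 1)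
    (hy₂ : (∀ i, ∃ m : ℤ, |m| ≤ 2 ^ k ∧ y₂ i = m * η) ∧ ∃ i, |y₂ i| = 1)
    (hne : ‖y₁‖⁻¹ • y₁ ≠ ‖y₂‖⁻¹ • y₂) :
    η / (2 * Real.sqrt (n + 1 : ℝ)) ≤
      Real.arccos ⟪‖y₁‖⁻¹ • y₁, ‖y₂‖⁻¹ • y₂⟫ := by
  subst hη
  obtain ⟨hgrid₁, hy₁⟩ := hy₁
  obtain ⟨hgrid₂, hy₂⟩ := hy₂
  have hcube : ∀ y : EuclideanSpace ℝ (Fin (n + 1)),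
      (∀ i, ∃ m : ℤ, |m| ≤ 2 ^ k ∧ y i = m * 2 ^ (-(k : ℤ))) → ∀ i, |y i| ≤ 1 := by
    intro y hgrid i
    obtain ⟨m, hm, hyi⟩ := hgrid i
    exact hyi ▸ abs_intCast_mul_zpow_neg_le_one hm
  have hsep : ∃ j, 2 ^ (-(k : ℤ)) ≤ |y₁ j - y₂ j| := by
    obtain ⟨j, hj⟩ : ∃ j, y₁ j ≠ y₂ j := by
      by_contra! h
      exact hne (by rw [PiLp.ext h])
    obtain ⟨m₁, -, h₁⟩ := hgrid₁ j
    obtain ⟨m₂, -, h₂⟩ := hgrid₂ j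
    refine ⟨j, ?_⟩
    rw [h₁, h₂] at hj ⊢
    exact le_abs_intCast_mul_sub (by positivity) hj
  have hunit : ∀ y : EuclideanSpace ℝ (Fin (n + 1)), (∃ i, |y i| = 1) → ‖‖y‖⁻¹ • y‖ = 1 := by
    rintro y ⟨i, hi⟩
    refine norm_smul_inv_norm fun h => ?_
    simp [h] at hi
  calc (2 : ℝ) ^ (-(k : ℤ)) / (2 * √(n + 1 : ℝ))
      = 2 ^ (-(k : ℤ)) / (2 * √(Fintype.card (Fin (n + 1)))) := by simp
    _ ≤ ‖‖y₁‖⁻¹ • y₁ - ‖y₂‖⁻¹ • y₂‖ :=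
      div_two_sqrt_card_le_norm_sub (hcube y₁ hgrid₁) (hcube y₂ hgrid₂) hy₁ hy₂ hsep
    _ ≤ arccos ⟪‖y₁‖⁻¹ • y₁, ‖y₂‖⁻¹ • y₂⟫ :=
      norm_sub_le_arccos_inner (hunit y₁ hy₁) (hunit y₂ hy₂)

/-- Any two distinct points of the grid `G_η` (radial projection to the
sphere of the uniform grid of mesh `η = 2^{-k}` on the cube `‖y‖_∞ = 1`)
are at angular distance at least `η/(2√(n+1))`. -/
theorem stmt_10 (n k : ℕ) (hk : 1 ≤ k) (η : ℝ) (hη : η = (2 : ℝ) ^ (-(k : ℤ)))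
    (y₁ y₂ : EuclideanSpace ℝ (Fin (n + 1)))
    (hy₁ : (∀ i, ∃ m : ℤ, |m| ≤ 2 ^ k ∧ y₁ i = m * η) ∧ ∃ i, |y₁ i| = 1)
    (hy₂ : (∀ i, ∃ m : ℤ, |m| ≤ 2 ^ k ∧ y₂ i = m * η) ∧ ∃ i, |y₂ i| = 1)
    (hne : ‖y₁‖⁻¹ • y₁ ≠ ‖y₂‖⁻¹ • y₂) :
    η / (2 * Real.sqrt (n + 1 : ℝ)) ≤
      Real.arccos ⟪‖y₁‖⁻¹ • y₁, ‖y₂‖⁻¹ • y₂⟫ :=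
  stmt_10_general n k η hη y₁ y₂ hy₁ hy₂ hne
end
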